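/- Let l, n be positive integers with 1 \le l \le n and let \Lambda = (0, 1, ..., l-1, l+1, ..., n+1) (omitting l). The Gelfond-Bernstein basis of span(1, t, ..., t^{l-1}, t^{l+1}, ..., t^{n+1}) on [0,1] is given by: H_k(t) = ((l-k)/l) \binom{n+1}{k} t^k (1-t)^{n-k} (1 + ((n-l+1)/(l-k)) t) for 0 \le k \le l-1, and H_k(t) = \binom{n+1}{k+1} t^{k+1} (1-t)^{n-k} for l \le k \le n. -/

import Mathlib

/-- The divided difference `[x 0, ..., x n] f` at pairwise distinct points,
given by the explicit formula `∑ i, f (x i) / ∏_{j ≠ i} (x i - x j)`. -/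
noncomputable def divSum (n : ℕ) (x : Fin (n+1) → ℝ) (f : ℝ → ℝ) : ℝ :=
  ∑ i : Fin (n+1), f (x i) / ∏ j ∈ Finset.univ.erase i, (x i - x j)


/-- The Gelfond-Bernstein basis function `H^n_{k,Λ}` associated with the sequence
`Λ = (r 0, ..., r n)`: `H^n_k (t) = (-1)^(n-k) r_{k+1} ⋯ r_n [r_k, ..., r_n] f_t`
for `k ≤ n-1` and `H^n_n (t) = t ^ (r n)`, where `f_t x = t ^ x` (real power). -/
noncomputable def GB (n : ℕ) (r : Fin (n+1) → ℝ) (k : Fin (n+1)) (t : ℝ) : ℝ :=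
  if k.val = n then t ^ (r k)
  else (-1 : ℝ) ^ (n - k.val) * (∏ j ∈ Finset.Ioi k, r j) *
    divSum (n - k.val)
      (fun i => r ⟨k.val + i.val, by have h1 := i.isLt; have h2 := k.isLt; omega⟩)
      (fun x => t ^ x)

/-! The nodes of `H_k` are `{k+1, …, n+1}` when `l ≤ k`, and `{k, …, n+1} \ {l}` when `k < l`.
At consecutive integers `a, …, a+N` the divided difference of `x ↦ t^x` is `t^a (t-1)^N / N!`
by the binomial theorem. A gapped node set reduces to consecutive ones through
`[S \ {c}] f = [S \ {d}] f + (d - c) [S] f`, applied with `d` the top node `n+1`. The prefactor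
`r_{k+1} ⋯ r_n` is a quotient of factorials, and what remains is algebra. -/

open Finset
open scoped Nat

section DividedDifference

variable {K : Type*} [Field K] [DecidableEq K]

def divDiff (s : Finset K) (f : K → K) : K :=
  ∑ x ∈ s, f x / ∏ y ∈ s.erase x, (x - y)

theorem divDiff_erase {s : Finset K} {c : K} (hc : c ∈ s) (f : K → K) :
    divDiff (s.erase c) f = divDiff s (fun x => (x - c) * f x) := by
  unfold divDiff
  rw [← sum_erase s (a := c) (by simp)]
  refine sum_congr rfl fun x hx => ?_
  have hxc : x - c ≠ 0 := sub_ne_zero.mpr (ne_of_mem_erase hx)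
  rw [← mul_prod_erase (s.erase x) (fun y => x - y) (mem_erase.mpr ⟨(ne_of_mem_erase hx).symm, hc⟩),
    erase_right_comm, mul_div_mul_left _ _ hxc]

theorem divDiff_erase_eq_divDiff_erase_add {s : Finset K} {c d : K} (hc : c ∈ s) (hd : d ∈ s)
    (f : K → K) :
    divDiff (s.erase c) f = divDiff (s.erase d) f + (d - c) * divDiff s f := by
  rw [divDiff_erase hc, divDiff_erase hd]
  unfold divDiff
  rw [mul_sum, ← sum_add_distrib]
  exact sum_congr rfl fun x _ => by ring

theorem divDiff_image {ι : Type*} [DecidableEq ι] {g : ι → K} (hg : Function.Injective g)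
    (s : Finset ι) (f : K → K) :
    divDiff (s.image g) f = ∑ i ∈ s, f (g i) / ∏ j ∈ s.erase i, (g i - g j) := by
  unfold divDiff
  rw [sum_image hg.injOn]
  refine sum_congr rfl fun i _ => ?_
  rw [← image_erase hg, prod_image hg.injOn]

theorem prod_erase_range_natCast_sub {R : Type*} [CommRing R] {N i : ℕ} (hi : i ≤ N) :
    ∏ j ∈ (range (N + 1)).erase i, ((i : R) - j) = (-1) ^ (N - i) * i ! * (N - i)! := by
  induction N, hi using Nat.le_induction with
  | base =>
    rw [range_add_one, erase_insert notMem_range_self, Nat.sub_self, pow_zero, one_mul,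
      Nat.factorial_zero, Nat.cast_one, mul_one, ← Nat.descFactorial_self,
      Nat.descFactorial_eq_prod_range, Nat.cast_prod]
    exact prod_congr rfl fun j hj => by rw [Nat.cast_sub (mem_range.mp hj).le]
  | succ N hiN ih =>
    rw [range_add_one, erase_insert_of_ne (by omega), prod_insert (by simp), ih,
      Nat.sub_add_comm hiN, Nat.factorial_succ, pow_succ]
    push_cast [Nat.cast_sub hiN]
    ring

theorem divDiff_image_Icc [CharZero K] (a N : ℕ) (f : K → K) :
    divDiff ((Icc a (a + N)).image (Nat.cast : ℕ → K)) f =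
      (∑ i ∈ range (N + 1), (-1) ^ (N - i) * (N.choose i) * f ((a + i : ℕ) : K)) / N ! := by
  have hIcc : Icc a (a + N) = (range (N + 1)).image (a + ·) := by
    rw [range_eq_Ico, image_add_left_Ico]; rfl
  rw [hIcc, image_image, divDiff_image (fun i j h => by simpa using h), sum_div]
  refine sum_congr rfl fun i hi => ?_
  have hiN : i ≤ N := Nat.lt_succ_iff.mp (mem_range.mp hi)
  have hprod : ∏ j ∈ (range (N + 1)).erase i, (((a + i : ℕ) : K) - ((a + j : ℕ) : K)) =
      (-1) ^ (N - i) * i ! * (N - i)! := by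
    rw [← prod_erase_range_natCast_sub hiN]
    exact prod_congr rfl fun j _ => by push_cast; ring
  have hchoose : (N.choose i : K) * i ! * (N - i)! = N ! := by
    exact_mod_cast Nat.choose_mul_factorial_mul_factorial hiN
  simp only [Function.comp_apply, hprod]
  rw [← hchoose]
  have hsq : ((-1 : K) ^ (N - i)) ^ 2 = 1 := by rw [← pow_mul, pow_mul', neg_one_sq, one_pow]
  have hC : (N.choose i : K) ≠ 0 := by exact_mod_cast (Nat.choose_pos hiN).ne'
  field_simp
  rw [hsq, mul_one]

end DividedDifference

theorem neg_one_pow_mul_sub_one_pow {R : Type*} [CommRing R] (t : R) (m : ℕ) :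
    (-1) ^ m * (t - 1) ^ m = (1 - t) ^ m := by
  rw [← mul_pow]; ring

theorem divSum_eq_divDiff {m : ℕ} {x : Fin (m + 1) → ℝ} (hx : Function.Injective x) (f : ℝ → ℝ) :
    divSum m x f = divDiff (univ.image x) f :=
  (divDiff_image hx univ f).symm

theorem divDiff_rpow_Icc (t : ℝ) (a N : ℕ) :
    divDiff ((Icc a (a + N)).image (Nat.cast : ℕ → ℝ)) (fun x => t ^ x) =
      t ^ a * (t - 1) ^ N / N ! := by
  rw [divDiff_image_Icc, sub_eq_add_neg, add_pow, mul_sum]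
  refine congrArg (· / _) (sum_congr rfl fun i _ => ?_)
  rw [Real.rpow_natCast, pow_add]
  ring

theorem divDiff_rpow_Icc_erase (t : ℝ) {a N c : ℕ} (hac : a ≤ c) (hc : c ≤ a + N + 1) :
    divDiff (((Icc a (a + N + 1)).image (Nat.cast : ℕ → ℝ)).erase (c : ℝ)) (fun x => t ^ x) =
      t ^ a * ((t - 1) ^ N / N ! + (a + N + 1 - c) * (t - 1) ^ (N + 1) / (N + 1)!) := by
  have hmem : ∀ q, a ≤ q → q ≤ a + N + 1 → ((q : ℕ) : ℝ) ∈ (Icc a (a + N + 1)).image Nat.cast :=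
    fun q h₁ h₂ => mem_image_of_mem _ (mem_Icc.mpr ⟨h₁, h₂⟩)
  rw [divDiff_erase_eq_divDiff_erase_add (hmem c hac hc) (hmem (a + N + 1) (by omega) le_rfl),
    ← image_erase Nat.cast_injective, Icc_erase_right, Ico_add_one_right_eq_Icc, add_assoc a N 1,
    divDiff_rpow_Icc, divDiff_rpow_Icc]
  push_cast
  ring

theorem GB_natCast_of_lt {n : ℕ} {ρ : ℕ → ℕ} (hρ : Function.Injective ρ) {k : Fin (n + 1)}
    (hk : (k : ℕ) < n) (t : ℝ) :
    GB n (fun i => ((ρ i : ℕ) : ℝ)) k t =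
      (-1) ^ (n - k) * (∏ q ∈ (Icc ((k : ℕ) + 1) n).image ρ, (q : ℝ)) *
        divDiff (((Icc (k : ℕ) n).image ρ).image Nat.cast) (fun x => t ^ x) := by
  have hprod : ∏ j ∈ Ioi k, ((ρ j : ℕ) : ℝ) = ∏ q ∈ (Icc ((k : ℕ) + 1) n).image ρ, (q : ℝ) := by
    have hIoi : Icc ((k : ℕ) + 1) n = (Ioi k).map Fin.valEmbedding := by
      rw [Fin.map_valEmbedding_Ioi]
      ext j
      simp only [mem_Ioo, mem_Icc]
      omega
    rw [prod_image hρ.injOn, hIoi, prod_map]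
    rfl
  have hnodes : univ.image (fun i : Fin (n - k + 1) => ((ρ (k + i) : ℕ) : ℝ)) =
      ((Icc (k : ℕ) n).image ρ).image Nat.cast := by
    ext y
    simp only [mem_image, mem_univ, true_and, mem_Icc]
    constructor
    · rintro ⟨i, rfl⟩
      exact ⟨_, ⟨k + i, ⟨by omega, by omega⟩, rfl⟩, rfl⟩
    · rintro ⟨_, ⟨q, ⟨hkq, hqn⟩, rfl⟩, rfl⟩
      exact ⟨⟨q - k, by omega⟩, by simp [Nat.add_sub_cancel' hkq]⟩
  rw [GB, if_neg hk.ne, hprod, divSum_eq_divDiff]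
  · congr 2
  · intro i j hij
    simpa [Fin.ext_iff] using hρ (Nat.cast_injective hij)

def Nat.succAbove (p i : ℕ) : ℕ := if i < p then i else i + 1

theorem Nat.succAbove_injective (p : ℕ) : Function.Injective (Nat.succAbove p) := by
  intro i j h
  unfold Nat.succAbove at h
  split_ifs at h <;> omega

theorem Nat.image_succAbove_Icc_of_le {p a b : ℕ} (hpa : p ≤ a) :
    (Icc a b).image (Nat.succAbove p) = Icc (a + 1) (b + 1) := by
  rw [← image_add_right_Icc]
  exact image_congr fun i hi => if_neg (by simp at hi; omega)

theorem Nat.image_succAbove_Icc_of_le_of_le {p a b : ℕ} (hap : a ≤ p) (hpb : p ≤ b + 1) :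
    (Icc a b).image (Nat.succAbove p) = (Icc a (b + 1)).erase p := by
  ext q
  simp only [mem_image, mem_erase, mem_Icc, Nat.succAbove]
  constructor
  · rintro ⟨i, hi, rfl⟩
    split_ifs <;> omega
  · rintro ⟨hqp, hq⟩
    by_cases hlt : q < p
    · exact ⟨q, by omega, if_pos hlt⟩
    · exact ⟨q - 1, by omega, by rw [if_neg (by omega)]; omega⟩

theorem Nat.factorial_mul_prod_Icc {a b : ℕ} (hab : a ≤ b) :
    a ! * ∏ q ∈ Icc (a + 1) b, q = b ! := by
  induction b, hab using Nat.le_induction with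
  | base => simp
  | succ b hab ih =>
    rw [Icc_add_one_left_eq_Ioc, prod_Ioc_succ_top hab, ← mul_assoc, ← Icc_add_one_left_eq_Ioc, ih,
      Nat.factorial_succ, mul_comm]

theorem GB_succAbove_of_le {l n : ℕ} {k : Fin (n + 1)} (hlk : l ≤ k) (hkn : (k : ℕ) < n) (t : ℝ) :
    GB n (fun i => ((Nat.succAbove l i : ℕ) : ℝ)) k t =
      ((n + 1).choose (k + 1)) * t ^ ((k : ℕ) + 1) * (1 - t) ^ (n - k) := by
  have hP : (((k : ℕ) + 1)! : ℝ) * ∏ q ∈ Icc ((k : ℕ) + 1 + 1) (n + 1), (q : ℝ) = (n + 1)! := by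
    rw [← Nat.cast_prod, ← Nat.cast_mul, Nat.factorial_mul_prod_Icc (by omega)]
  have hdd : divDiff ((Icc ((k : ℕ) + 1) (n + 1)).image Nat.cast) (fun x => t ^ x) =
      t ^ ((k : ℕ) + 1) * (t - 1) ^ (n - k) / (n - k)! := by
    rw [← divDiff_rpow_Icc, show (k : ℕ) + 1 + (n - k) = n + 1 by omega]
  rw [GB_natCast_of_lt (Nat.succAbove_injective l) hkn, Nat.image_succAbove_Icc_of_le (by omega),
    Nat.image_succAbove_Icc_of_le hlk, hdd, Nat.cast_choose ℝ (by omega : (k : ℕ) + 1 ≤ n + 1),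
    ← neg_one_pow_mul_sub_one_pow, ← hP, show n + 1 - ((k : ℕ) + 1) = n - k by omega]
  field_simp

theorem GB_succAbove_of_lt {l n : ℕ} {k : Fin (n + 1)} (hkl : (k : ℕ) < l) (hln : l ≤ n) (t : ℝ) :
    GB n (fun i => ((Nat.succAbove l i : ℕ) : ℝ)) k t =
      (((l : ℝ) - k) / l) * ((n + 1).choose k) * t ^ (k : ℕ) * (1 - t) ^ (n - k) *
        (1 + (((n : ℝ) - l + 1) / ((l : ℝ) - k)) * t) := by
  have hP :
      ((k : ℕ)! : ℝ) * (l * ∏ q ∈ (Icc ((k : ℕ) + 1) (n + 1)).erase l, (q : ℝ)) = (n + 1)! := by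
    rw [mul_prod_erase _ (fun q : ℕ => (q : ℝ)) (mem_Icc.mpr ⟨hkl, by omega⟩), ← Nat.cast_prod,
      ← Nat.cast_mul, Nat.factorial_mul_prod_Icc (by omega)]
  have hdd : divDiff (((Icc (k : ℕ) (n + 1)).image Nat.cast).erase (l : ℝ)) (fun x => t ^ x) =
      t ^ (k : ℕ) * ((t - 1) ^ (n - k) / (n - k)! +
        ((n : ℝ) + 1 - l) * (t - 1) ^ (n - k + 1) / (n - k + 1)!) := by
    have h := divDiff_rpow_Icc_erase t hkl.le (show l ≤ (k : ℕ) + (n - k) + 1 by omega)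
    rw [show (k : ℕ) + (n - k) + 1 = n + 1 by omega] at h
    rw [h]
    push_cast [show (k : ℕ) ≤ n by omega]
    ring
  rw [GB_natCast_of_lt (Nat.succAbove_injective l) (by omega),
    Nat.image_succAbove_Icc_of_le_of_le hkl (by omega),
    Nat.image_succAbove_Icc_of_le_of_le hkl.le (by omega), image_erase Nat.cast_injective, hdd,
    Nat.cast_choose ℝ (by omega : (k : ℕ) ≤ n + 1), ← neg_one_pow_mul_sub_one_pow, ← hP,
    show n + 1 - (k : ℕ) = n - k + 1 by omega]
  have hlk : (l : ℝ) - k ≠ 0 := sub_ne_zero.mpr (by exact_mod_cast hkl.ne')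
  have hl : (l : ℝ) ≠ 0 := by exact_mod_cast (by omega : l ≠ 0)
  have hnk : (n : ℝ) - k + 1 ≠ 0 := by
    have : ((k : ℕ) : ℝ) ≤ n := by exact_mod_cast (by omega : (k : ℕ) ≤ n)
    linarith
  push_cast [show (k : ℕ) ≤ n by omega, Nat.factorial_succ]
  field_simp
  ring

theorem stmt18_general (l n : ℕ) (hn : l ≤ n) (t : ℝ)
    (k : Fin (n+1)) :
    GB n (fun i => if (i : ℕ) < l then ((i : ℕ) : ℝ) else ((i : ℕ) : ℝ) + 1) k t =
      if (k : ℕ) < l then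
        (((l : ℝ) - (k : ℕ)) / l) * (((n+1).choose (k : ℕ)) : ℝ) * t ^ (k : ℕ)
          * (1 - t) ^ (n - (k : ℕ))
          * (1 + (((n : ℝ) - l + 1) / ((l : ℝ) - (k : ℕ))) * t)
      else (((n+1).choose ((k : ℕ) + 1)) : ℝ) * t ^ ((k : ℕ) + 1) * (1 - t) ^ (n - (k : ℕ)) := by
  have hr : (fun i : Fin (n + 1) => if (i : ℕ) < l then ((i : ℕ) : ℝ) else ((i : ℕ) : ℝ) + 1) =
      fun i : Fin (n + 1) => ((Nat.succAbove l i : ℕ) : ℝ) := by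
    funext i
    unfold Nat.succAbove
    split_ifs <;> push_cast <;> rfl
  rw [hr]
  split_ifs with hkl
  · exact GB_succAbove_of_lt hkl hn t
  rcases k.is_le.lt_or_eq with hkn | hkn
  · exact GB_succAbove_of_le (not_lt.mp hkl) hkn t
  · rw [GB, if_pos hkn, Nat.succAbove, if_neg hkl, hkn, Nat.choose_self, Nat.sub_self]
    simp [← Real.rpow_natCast]

/-- Explicit Gelfond-Bernstein basis for the elementary Muntz space
span(1, t, ..., t^(l-1), t^(l+1), ..., t^(n+1)) on [0,1]. -/
theorem stmt18 (l n : ℕ) (hl : 1 ≤ l) (hn : l ≤ n) (t : ℝ) (ht : t ∈ Set.Icc (0:ℝ) 1)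
    (k : Fin (n+1)) :
    GB n (fun i => if (i : ℕ) < l then ((i : ℕ) : ℝ) else ((i : ℕ) : ℝ) + 1) k t =
      if (k : ℕ) < l then
        (((l : ℝ) - (k : ℕ)) / l) * (((n+1).choose (k : ℕ)) : ℝ) * t ^ (k : ℕ)
          * (1 - t) ^ (n - (k : ℕ))
          * (1 + (((n : ℝ) - l + 1) / ((l : ℝ) - (k : ℕ))) * t)
      else (((n+1).choose ((k : ℕ) + 1)) : ℝ) * t ^ ((k : ℕ) + 1) * (1 - t) ^ (n - (k : ℕ)) :=
  stmt18_general l n hn t k
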